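/- Let G be a finite weighted graph with U(1)-signature s, μ : V → ℝ₊, and let h₁^s(μ) = min over nonempty V1 ⊆ V of (ι^s(V1) + |E(V1,V1^c)|) / vol_μ(V1). Then the first eigenvalue of the magnetic Laplacian satisfies λ₁(Δ_μ^s) ≤ 2 h₁^s(μ). -/

import Mathlib

open Finset

/-- Rayleigh quotient of `f` for the magnetic Laplacian with weights `w`,
vertex measure `μ` and signature `s` (each unordered edge counted once). -/
noncomputable def rayleigh {V : Type*} [Fintype V] (G : SimpleGraph V) [DecidableRel G.Adj]
    (w : V → V → ℝ) (μ : V → ℝ) (s : V → V → ℂ) (f : V → ℂ) : ℝ :=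
  ((1 / 2) * ∑ u : V, ∑ v : V, if G.Adj u v then w u v * ‖f u - s u v * f v‖ ^ 2 else 0) /
    (∑ u : V, ‖f u‖ ^ 2 * μ u)

/-- The first eigenvalue of the magnetic Laplacian, characterized by the
variational (min-max) principle as the infimum of Rayleigh quotients. -/
noncomputable def lam1 {V : Type*} [Fintype V] (G : SimpleGraph V) [DecidableRel G.Adj]
    (w : V → V → ℝ) (μ : V → ℝ) (s : V → V → ℂ) : ℝ :=
  sInf { x : ℝ | ∃ f : V → ℂ, f ≠ 0 ∧ x = rayleigh G w μ s f }

/-- Frustration index of `V1` with `U(1)`-valued switching functions. -/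
noncomputable def frusIdx {V : Type*} [Fintype V] (G : SimpleGraph V) [DecidableRel G.Adj]
    (w : V → V → ℝ) (s : V → V → ℂ) (V1 : Finset V) : ℝ :=
  sInf { x : ℝ | ∃ τ : V → ℂ, (∀ u, ‖τ u‖ = 1) ∧
    x = (1 / 2) * ∑ u ∈ V1, ∑ v ∈ V1, if G.Adj u v then w u v * ‖τ u - s u v * τ v‖ else 0 }

/-- Weighted boundary measure `|E(V1, V1ᶜ)|`. -/
noncomputable def bdry {V : Type*} [Fintype V] [DecidableEq V] (G : SimpleGraph V)
    [DecidableRel G.Adj] (w : V → V → ℝ) (V1 : Finset V) : ℝ :=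
  ∑ u ∈ V1, ∑ v ∈ V1ᶜ, if G.Adj u v then w u v else 0

/-- `μ`-volume of `V1`. -/
noncomputable def vol {V : Type*} [Fintype V] (μ : V → ℝ) (V1 : Finset V) : ℝ :=
  ∑ u ∈ V1, μ u

/-- The Cheeger constant `h₁ˢ(μ)`. -/
noncomputable def cheeger1 {V : Type*} [Fintype V] [DecidableEq V] (G : SimpleGraph V)
    [DecidableRel G.Adj] (w : V → V → ℝ) (μ : V → ℝ) (s : V → V → ℂ) : ℝ :=
  sInf { x : ℝ | ∃ V1 : Finset V, V1.Nonempty ∧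
    x = (frusIdx G w s V1 + bdry G w V1) / vol μ V1 }

/-- Maximal `μ`-degree `d_μ`. -/
noncomputable def dmu {V : Type*} [Fintype V] (G : SimpleGraph V) [DecidableRel G.Adj]
    (w : V → V → ℝ) (μ : V → ℝ) : ℝ :=
  ⨆ u : V, (∑ v : V, if G.Adj u v then w u v else 0) / μ u

/-!
Take a switching `τ : V → U(1)` and test the Rayleigh quotient on `f = τ · 1_{V1}`, whose
squared `μ`-norm is `vol_μ(V1)`. An edge inside `V1` contributes
`w ‖τ u - s τ v‖² ≤ 2 w ‖τ u - s τ v‖` (the norm is at most `2`), an edge leaving `V1`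
contributes `w`, and the other edges contribute nothing. Hence
`λ₁ vol_μ(V1) ≤ 2 ι^s(V1) + |E(V1, V1ᶜ)| ≤ 2 (ι^s(V1) + |E(V1, V1ᶜ)|)`.
-/

lemma sum_sum_eq_sum_blocks {V M : Type*} [Fintype V] [DecidableEq V] [AddCommMonoid M]
    (S : Finset V) (F : V → V → M) :
    ∑ u, ∑ v, F u v = (∑ u ∈ S, ∑ v ∈ S, F u v + ∑ u ∈ S, ∑ v ∈ Sᶜ, F u v) +
      (∑ u ∈ Sᶜ, ∑ v ∈ S, F u v + ∑ u ∈ Sᶜ, ∑ v ∈ Sᶜ, F u v) := by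
  simp only [← sum_add_sum_compl S, sum_add_distrib]

lemma norm_sub_mul_le_two {a b c : ℂ} (ha : ‖a‖ = 1) (hb : ‖b‖ = 1) (hc : ‖c‖ = 1) :
    ‖a - c * b‖ ≤ 2 :=
  calc ‖a - c * b‖ ≤ ‖a‖ + ‖c * b‖ := norm_sub_le _ _
    _ = 2 := by rw [norm_mul, ha, hb, hc]; norm_num

section
variable {V : Type*} (G : SimpleGraph V) [DecidableRel G.Adj]
  (w : V → V → ℝ) (μ : V → ℝ) (s : V → V → ℂ)

noncomputable def edgeEnergy (f : V → ℂ) (u v : V) : ℝ :=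
  if G.Adj u v then w u v * ‖f u - s u v * f v‖ ^ 2 else 0

noncomputable def frusEnergy (V1 : Finset V) (τ : V → ℂ) : ℝ :=
  (1 / 2) * ∑ u ∈ V1, ∑ v ∈ V1, if G.Adj u v then w u v * ‖τ u - s u v * τ v‖ else 0

variable {G w μ s}

lemma edgeEnergy_nonneg (hw : ∀ u v, G.Adj u v → 0 ≤ w u v) (f : V → ℂ) (u v : V) :
    0 ≤ edgeEnergy G w s f u v := by
  unfold edgeEnergy
  split_ifs with h
  exacts [mul_nonneg (hw u v h) (sq_nonneg _), le_rfl]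

lemma edgeEnergy_le_two_mul (hw : ∀ u v, G.Adj u v → 0 ≤ w u v)
    (hs : ∀ u v, G.Adj u v → ‖s u v‖ = 1) {τ : V → ℂ} (hτ : ∀ u, ‖τ u‖ = 1) (u v : V) :
    edgeEnergy G w s τ u v ≤ 2 * if G.Adj u v then w u v * ‖τ u - s u v * τ v‖ else 0 := by
  unfold edgeEnergy
  split_ifs with h
  · have hx := norm_sub_mul_le_two (hτ u) (hτ v) (hs u v h)
    have hwx := mul_nonneg (hw u v h) (norm_nonneg (τ u - s u v * τ v))
    nlinarith [mul_le_mul_of_nonneg_left hx hwx]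
  · simp

variable [Fintype V]

lemma rayleigh_eq_sum_edgeEnergy (f : V → ℂ) :
    rayleigh G w μ s f =
      (1 / 2) * (∑ u, ∑ v, edgeEnergy G w s f u v) / ∑ u, ‖f u‖ ^ 2 * μ u :=
  rfl

lemma rayleigh_nonneg (hw : ∀ u v, G.Adj u v → 0 ≤ w u v) (hμ : ∀ u, 0 ≤ μ u) (f : V → ℂ) :
    0 ≤ rayleigh G w μ s f :=
  div_nonneg (mul_nonneg (by norm_num) (sum_nonneg fun u _ => sum_nonneg fun v _ =>
    edgeEnergy_nonneg hw f u v)) (sum_nonneg fun u _ => mul_nonneg (sq_nonneg _) (hμ u))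

lemma lam1_le_rayleigh (hw : ∀ u v, G.Adj u v → 0 ≤ w u v) (hμ : ∀ u, 0 ≤ μ u) {f : V → ℂ}
    (hf : f ≠ 0) : lam1 G w μ s ≤ rayleigh G w μ s f :=
  csInf_le ⟨0, by rintro _ ⟨g, -, rfl⟩; exact rayleigh_nonneg hw hμ g⟩ ⟨f, hf, rfl⟩

lemma lam1_eq_zero_of_isEmpty [IsEmpty V] : lam1 G w μ s = 0 := by
  simp [lam1, funext_iff]

lemma vol_pos (hμ : ∀ u, 0 < μ u) {V1 : Finset V} (hne : V1.Nonempty) : 0 < vol μ V1 :=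
  sum_pos (fun u _ => hμ u) hne

variable [DecidableEq V]

lemma cheeger1_eq_zero_of_isEmpty [IsEmpty V] : cheeger1 G w μ s = 0 := by
  simp [cheeger1, Finset.Nonempty]

lemma bdry_nonneg (hw : ∀ u v, G.Adj u v → 0 ≤ w u v) (V1 : Finset V) : 0 ≤ bdry G w V1 :=
  sum_nonneg fun u _ => sum_nonneg fun v _ => by split_ifs with h; exacts [hw u v h, le_rfl]

lemma bdry_eq_sum_compl (hw : ∀ u v, w u v = w v u) (V1 : Finset V) :
    bdry G w V1 = ∑ u ∈ V1ᶜ, ∑ v ∈ V1, if G.Adj u v then w u v else 0 := by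
  rw [bdry, sum_comm]
  simp only [G.adj_comm, hw]

lemma sum_norm_indicator_sq_mul_eq_vol {V1 : Finset V} {τ : V → ℂ} (hτ : ∀ u, ‖τ u‖ = 1) :
    ∑ u, ‖(V1 : Set V).indicator τ u‖ ^ 2 * μ u = vol μ V1 := by
  simp [Set.indicator_apply, apply_ite, hτ, vol, sum_ite_mem]

lemma sum_edgeEnergy_indicator_le (hw_sym : ∀ u v, w u v = w v u)
    (hw : ∀ u v, G.Adj u v → 0 ≤ w u v) (hs : ∀ u v, G.Adj u v → ‖s u v‖ = 1) (V1 : Finset V)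
    {τ : V → ℂ} (hτ : ∀ u, ‖τ u‖ = 1) :
    (1 / 2) * ∑ u, ∑ v, edgeEnergy G w s ((V1 : Set V).indicator τ) u v ≤
      2 * frusEnergy G w s V1 τ + bdry G w V1 := by
  set f := (V1 : Set V).indicator τ
  have hf_in {u} (hu : u ∈ V1) : f u = τ u := Set.indicator_of_mem (mem_coe.2 hu) τ
  have hf_out {u} (hu : u ∈ V1ᶜ) : f u = 0 := Set.indicator_of_notMem (by simpa using hu) τ
  have h_in : ∑ u ∈ V1, ∑ v ∈ V1, edgeEnergy G w s f u v ≤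
      2 * ∑ u ∈ V1, ∑ v ∈ V1, if G.Adj u v then w u v * ‖τ u - s u v * τ v‖ else 0 := by
    simp only [mul_sum]
    refine sum_le_sum fun u hu => sum_le_sum fun v hv => ?_
    rw [edgeEnergy, hf_in hu, hf_in hv]
    exact edgeEnergy_le_two_mul hw hs hτ u v
  have h_out : ∑ u ∈ V1, ∑ v ∈ V1ᶜ, edgeEnergy G w s f u v = bdry G w V1 :=
    sum_congr rfl fun u hu => sum_congr rfl fun v hv => by
      simp [edgeEnergy, hf_in hu, hf_out hv, hτ]
  have h_back : ∑ u ∈ V1ᶜ, ∑ v ∈ V1, edgeEnergy G w s f u v = bdry G w V1 := by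
    rw [bdry_eq_sum_compl hw_sym]
    refine sum_congr rfl fun u hu => sum_congr rfl fun v hv => ?_
    by_cases h : G.Adj u v <;> simp [edgeEnergy, h, hf_in hv, hf_out hu, hτ, hs]
  have h_zero : ∑ u ∈ V1ᶜ, ∑ v ∈ V1ᶜ, edgeEnergy G w s f u v = 0 :=
    sum_eq_zero fun u hu => sum_eq_zero fun v hv => by simp [edgeEnergy, hf_out hu, hf_out hv]
  rw [sum_sum_eq_sum_blocks V1, h_out, h_back, h_zero, frusEnergy]
  linarith

lemma lam1_mul_vol_le (hw_sym : ∀ u v, w u v = w v u) (hw : ∀ u v, G.Adj u v → 0 ≤ w u v)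
    (hμ : ∀ u, 0 < μ u) (hs : ∀ u v, G.Adj u v → ‖s u v‖ = 1) {V1 : Finset V}
    (hne : V1.Nonempty) {τ : V → ℂ} (hτ : ∀ u, ‖τ u‖ = 1) :
    lam1 G w μ s * vol μ V1 ≤ 2 * frusEnergy G w s V1 τ + bdry G w V1 := by
  have hvol := vol_pos hμ hne
  have hf : (V1 : Set V).indicator τ ≠ 0 := fun h => by
    obtain ⟨a, ha⟩ := hne
    simpa [ha, hτ] using congrArg norm (congrFun h a)
  calc lam1 G w μ s * vol μ V1
      ≤ rayleigh G w μ s ((V1 : Set V).indicator τ) * vol μ V1 :=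
        mul_le_mul_of_nonneg_right (lam1_le_rayleigh hw (fun u => (hμ u).le) hf) hvol.le
    _ = (1 / 2) * ∑ u, ∑ v, edgeEnergy G w s ((V1 : Set V).indicator τ) u v := by
        rw [rayleigh_eq_sum_edgeEnergy, sum_norm_indicator_sq_mul_eq_vol hτ,
          div_mul_cancel₀ _ hvol.ne']
    _ ≤ 2 * frusEnergy G w s V1 τ + bdry G w V1 := sum_edgeEnergy_indicator_le hw_sym hw hs V1 hτ

lemma lam1_mul_vol_le_two_mul_frusIdx_add_bdry (hw_sym : ∀ u v, w u v = w v u)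
    (hw : ∀ u v, G.Adj u v → 0 ≤ w u v) (hμ : ∀ u, 0 < μ u)
    (hs : ∀ u v, G.Adj u v → ‖s u v‖ = 1) {V1 : Finset V} (hne : V1.Nonempty) :
    lam1 G w μ s * vol μ V1 ≤ 2 * frusIdx G w s V1 + bdry G w V1 := by
  have : (lam1 G w μ s * vol μ V1 - bdry G w V1) / 2 ≤ frusIdx G w s V1 := by
    refine le_csInf ⟨_, fun _ => 1, fun _ => norm_one, rfl⟩ ?_
    rintro _ ⟨τ, hτ, rfl⟩
    have := lam1_mul_vol_le hw_sym hw hμ hs hne hτ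
    rw [frusEnergy] at this
    linarith
  linarith

lemma lam1_le_two_mul_cheeger_ratio (hw_sym : ∀ u v, w u v = w v u)
    (hw : ∀ u v, G.Adj u v → 0 ≤ w u v) (hμ : ∀ u, 0 < μ u)
    (hs : ∀ u v, G.Adj u v → ‖s u v‖ = 1) {V1 : Finset V} (hne : V1.Nonempty) :
    lam1 G w μ s ≤ 2 * ((frusIdx G w s V1 + bdry G w V1) / vol μ V1) := by
  rw [mul_div_assoc', le_div_iff₀ (vol_pos hμ hne)]
  linarith [bdry_nonneg hw V1, lam1_mul_vol_le_two_mul_frusIdx_add_bdry hw_sym hw hμ hs hne]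

end

theorem stmt_8_general {V : Type*} [Fintype V] [DecidableEq V] (G : SimpleGraph V) [DecidableRel G.Adj]
    (w : V → V → ℝ) (μ : V → ℝ) (s : V → V → ℂ)
    (hw_sym : ∀ u v, w u v = w v u)
    (hw_pos : ∀ u v, G.Adj u v → 0 < w u v)
    (hμ : ∀ u, 0 < μ u)
    (hs_unit : ∀ u v, G.Adj u v → ‖s u v‖ = 1) :
    lam1 G w μ s ≤ 2 * cheeger1 G w μ s := by
  rcases isEmpty_or_nonempty V with _ | _
  · simp [lam1_eq_zero_of_isEmpty, cheeger1_eq_zero_of_isEmpty]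
  have hw : ∀ u v, G.Adj u v → 0 ≤ w u v := fun u v h => (hw_pos u v h).le
  have : lam1 G w μ s / 2 ≤ cheeger1 G w μ s := by
    refine le_csInf ⟨_, univ, univ_nonempty, rfl⟩ ?_
    rintro _ ⟨V1, hne, rfl⟩
    linarith [lam1_le_two_mul_cheeger_ratio hw_sym hw hμ hs_unit hne]
  linarith

theorem stmt_8 {V : Type*} [Fintype V] [DecidableEq V] (G : SimpleGraph V) [DecidableRel G.Adj]
    (w : V → V → ℝ) (μ : V → ℝ) (s : V → V → ℂ)
    (hw_sym : ∀ u v, w u v = w v u)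
    (hw_pos : ∀ u v, G.Adj u v → 0 < w u v)
    (hμ : ∀ u, 0 < μ u)
    (hs_unit : ∀ u v, G.Adj u v → ‖s u v‖ = 1)
    (hs_inv : ∀ u v, G.Adj u v → s v u = (s u v)⁻¹) :
    lam1 G w μ s ≤ 2 * cheeger1 G w μ s :=
  stmt_8_general G w μ s hw_sym hw_pos hμ hs_unit
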